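/- (Decoding content of Theorem 3) Let N, M', t', s be nonnegative integers with 2t' + s ≤ N − M', let K be a finite field with q^m elements, m ≥ N, and let g_1, …, g_N ∈ K be linearly independent over F_q. Let T ⊆ {1, …, N} with |T| = N − s. For j = 1, 2 let f_j(x) = Σ_{i=0}^{M'−1} a_i^{(j)} x^{q^i} be a linearized polynomial of q-degree at most M' − 1 and let e_j ∈ K^N satisfy rank_{F_q}(e_j) ≤ t'. If f_1(g_i) + (e_1)_i = f_2(g_i) + (e_2)_i for all i ∈ T, then a_i^{(1)} = a_i^{(2)} for all 0 ≤ i ≤ M' − 1. (Applied with t' = tα and s = N − ⌊(n − d_min + 1)/(r + δ − 1)⌋·rα − min{hα, rα}, this shows that in Construction II, if the outer Gabidulin code has minimum rank distance D ≥ 2tα + (n/(r+δ−1) − ⌊(n − d_min + 1)/(r + δ − 1)⌋)rα − min{hα, rα} + 1, then the original data can be recovered from any n − d_min + 1 nodes in the presence of t statically corrupted nodes.) -/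

import Mathlib

/-- The subfield `F_q = {a ∈ K : a ^ q = a}` of a field `K` of characteristic `p`,
where `q = p ^ e`. -/
def Fqsub (p e : ℕ) (K : Type*) [Field K] [Fact p.Prime] [CharP K p] : Subfield K where
  carrier := {x : K | x ^ p ^ e = x}
  mul_mem' := by
    intro a b ha hb
    simp only [Set.mem_setOf_eq] at *
    rw [mul_pow, ha, hb]
  one_mem' := by simp
  add_mem' := by
    intro a b ha hb
    haveI : ExpChar K p := ExpChar.prime Fact.out
    simp only [Set.mem_setOf_eq] at *
    rw [add_pow_expChar_pow, ha, hb]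
  zero_mem' := by
    simp only [Set.mem_setOf_eq]
    exact zero_pow (pow_ne_zero _ (Nat.Prime.ne_zero Fact.out))
  neg_mem' := by
    intro a ha
    haveI : ExpChar K p := ExpChar.prime Fact.out
    simp only [Set.mem_setOf_eq] at *
    calc (-a) ^ p ^ e = (0 - a) ^ p ^ e := by rw [zero_sub]
    _ = 0 ^ p ^ e - a ^ p ^ e := sub_pow_expChar_pow 0 a e
    _ = -a := by
        rw [ha, zero_pow (pow_ne_zero _ (Nat.Prime.ne_zero (Fact.out : p.Prime))), zero_sub]
  inv_mem' := by
    intro x hx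
    simp only [Set.mem_setOf_eq] at *
    rw [inv_pow, hx]

/-- The rank over `F_q` of a vector `v ∈ K^N`: the dimension over `F_q` of the
`F_q`-linear span of its coordinates. -/
noncomputable def rankFq (p e : ℕ) (K : Type*) [Field K] [Fact p.Prime] [CharP K p]
    {N : ℕ} (v : Fin N → K) : ℕ :=
  Module.finrank (Fqsub p e K) (Submodule.span (Fqsub p e K) (Set.range v))

/-!
The difference `L` of the two linearized polynomials is `F_q`-linear. It maps the
`(N - s)`-dimensional span of the `g i`, `i ∈ T`, into the span of the coordinates of `w₁` and
`w₂`, of dimension at most `2t'`, so its kernel on that span has dimension at least `M'` and hence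
at least `q ^ M'` elements (`F_q` is a copy of `GF(q)` inside the field `K` of order `q ^ m`).
All of them are roots of a polynomial of degree at most `q ^ (M' - 1)`, which therefore vanishes.
-/

open Module Polynomial

theorem Submodule.finrank_le_finrank_inf_ker_add_finrank {F M₁ M₂ : Type*} [DivisionRing F]
    [AddCommGroup M₁] [Module F M₁] [AddCommGroup M₂] [Module F M₂]
    {V : Submodule F M₁} {W : Submodule F M₂} [FiniteDimensional F V] [FiniteDimensional F W]
    {f : M₁ →ₗ[F] M₂} (h : V.map f ≤ W) :
    finrank F V ≤ finrank F ↥(V ⊓ LinearMap.ker f) + finrank F W := by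
  have hker : finrank F (LinearMap.ker (f.domRestrict V)) = finrank F ↥(V ⊓ LinearMap.ker f) := by
    rw [LinearMap.ker_domRestrict, ← Submodule.finrank_map_subtype_eq, Submodule.map_comap_subtype]
  have hrange : finrank F (LinearMap.range (f.domRestrict V)) ≤ finrank F W := by
    rw [LinearMap.range_domRestrict]
    exact Submodule.finrank_mono h
  have := LinearMap.finrank_range_add_finrank_ker (f.domRestrict V)
  omega

section LinearizedPoly

variable {K : Type*} [Semiring K] {M : ℕ}

noncomputable def linearizedPoly (q : ℕ) (a : Fin M → K) : K[X] :=
  ∑ j, C (a j) * X ^ q ^ (j : ℕ)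

theorem natDegree_linearizedPoly_le {q : ℕ} (hq : 0 < q) (a : Fin M → K) :
    (linearizedPoly q a).natDegree ≤ q ^ (M - 1) := by
  refine natDegree_sum_le_of_forall_le _ _ fun j _ ↦
    ((natDegree_C_mul_le _ _).trans (natDegree_X_pow_le _)).trans ?_
  exact Nat.pow_le_pow_right hq (by omega)

theorem coeff_linearizedPoly {q : ℕ} (hq : 1 < q) (a : Fin M → K) (j : Fin M) :
    (linearizedPoly q a).coeff (q ^ (j : ℕ)) = a j := by
  simp [linearizedPoly, coeff_C_mul, coeff_X_pow, (Nat.pow_right_injective hq).eq_iff,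
    Fin.val_inj]

theorem linearizedPoly_ne_zero {q : ℕ} (hq : 1 < q) {a : Fin M → K} (ha : a ≠ 0) :
    linearizedPoly q a ≠ 0 := by
  obtain ⟨j, hj⟩ := Function.ne_iff.1 ha
  exact fun h ↦ hj (by rw [← coeff_linearizedPoly hq a j, h, coeff_zero, Pi.zero_apply])

end LinearizedPoly

section LinearizedMap

variable (p e : ℕ) {K : Type*} [Field K] [Fact p.Prime] [CharP K p]

theorem Fqsub.pow_pow_eq (c : Fqsub p e K) (n : ℕ) : (c : K) ^ (p ^ e) ^ n = c := by
  induction n with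
  | zero => simp
  | succ n ih => rw [pow_succ, pow_mul, ih]; exact c.2

theorem Fqsub.le_natCard [Finite K] {m : ℕ} (hcard : Nat.card K = (p ^ e) ^ m)
    (hq : 1 < p ^ e) : p ^ e ≤ Nat.card (Fqsub p e K) := by
  let _ : Algebra (ZMod p) K := ZMod.algebra K p
  have _ : Fintype (GaloisField p e) := Fintype.ofFinite _
  have he : e ≠ 0 := by rintro rfl; simp at hq
  have hK : finrank (ZMod p) K = e * m := by
    apply Nat.pow_right_injective (Fact.out : p.Prime).two_le
    dsimp only
    rw [FiniteField.pow_finrank_eq_natCard, hcard, pow_mul]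
  -- `GF(q)` embeds into `K` since `e ∣ [K : 𝔽_p] = e * m`, and its image is fixed by `x ↦ x ^ q`.
  obtain ⟨φ⟩ := FiniteField.nonempty_algHom_of_finrank_dvd (F := ZMod p) (K := GaloisField p e)
    (L := K) (by rw [GaloisField.finrank p he, hK]; exact dvd_mul_right e m)
  have hφ (x : GaloisField p e) : φ x ∈ Fqsub p e K := by
    change φ x ^ p ^ e = φ x
    rw [← map_pow, ← GaloisField.card p e he, Nat.card_eq_fintype_card, FiniteField.pow_card]
  calc p ^ e = Nat.card (GaloisField p e) := (GaloisField.card p e he).symm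
    _ ≤ Nat.card (Fqsub p e K) :=
      Nat.card_le_card_of_injective (fun x ↦ ⟨φ x, hφ x⟩)
        fun x y hxy ↦ φ.injective (congrArg Subtype.val hxy)

noncomputable def linearizedMap {M : ℕ} (a : Fin M → K) : K →ₗ[Fqsub p e K] K where
  toFun x := ∑ j, a j * x ^ (p ^ e) ^ (j : ℕ)
  map_add' x y := by
    have : ExpChar K p := ExpChar.prime Fact.out
    simp only [← pow_mul, add_pow_expChar_pow, mul_add, Finset.sum_add_distrib]
  map_smul' c x := by
    simp only [Subfield.smul_def, smul_eq_mul, RingHom.id_apply, Finset.mul_sum, mul_pow,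
      Fqsub.pow_pow_eq, mul_left_comm]

variable {p e} {M : ℕ}

theorem linearizedMap_apply (a : Fin M → K) (x : K) :
    linearizedMap p e a x = ∑ j, a j * x ^ (p ^ e) ^ (j : ℕ) := rfl

theorem eval_linearizedPoly (a : Fin M → K) (x : K) :
    (linearizedPoly (p ^ e) a).eval x = linearizedMap p e a x := by
  simp [linearizedPoly, linearizedMap_apply, eval_finsetSum]

theorem eq_zero_of_le_finrank_of_le_ker_linearizedMap [Finite K] (hq : 1 < p ^ e)
    (hFq : p ^ e ≤ Nat.card (Fqsub p e K)) {a : Fin M → K} {U : Submodule (Fqsub p e K) K}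
    (hU : U ≤ LinearMap.ker (linearizedMap p e a)) (hM : M ≤ finrank (Fqsub p e K) U) :
    a = 0 := by
  classical
  have _ : Fintype K := Fintype.ofFinite K
  by_contra ha
  have hM0 : M ≠ 0 := by rintro rfl; exact ha (Subsingleton.elim _ _)
  have hP := linearizedPoly_ne_zero hq ha
  have hroots : ((U : Set K).toFinset).val ⊆ (linearizedPoly (p ^ e) a).roots := fun x hx ↦ by
    rw [mem_roots hP, IsRoot, eval_linearizedPoly]
    exact hU (Set.mem_toFinset.1 hx)
  have hupper : Nat.card U ≤ (p ^ e) ^ (M - 1) := by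
    rw [← SetLike.coe_sort_coe, Nat.card_coe_set_eq, Set.ncard_eq_toFinset_card']
    exact (card_le_degree_of_subset_roots hroots).trans
      (natDegree_linearizedPoly_le (by omega) a)
  have hlower : (p ^ e) ^ M ≤ Nat.card U := by
    rw [Module.natCard_eq_pow_finrank (K := Fqsub p e K)]
    exact (Nat.pow_le_pow_left hFq M).trans (Nat.pow_le_pow_right Nat.card_pos hM)
  have := Nat.pow_lt_pow_right hq (Nat.sub_lt (Nat.pos_of_ne_zero hM0) one_pos)
  omega

end LinearizedMap

theorem construction_II_decoding_general
    (p e m : ℕ) [Fact p.Prime]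
    (K : Type*) [Field K] [Fintype K] [CharP K p]
    (hcard : Fintype.card K = (p ^ e) ^ m)
    (N M' t' s : ℕ) (hts : 2 * t' + s + M' ≤ N)
    (g : Fin N → K) (hg : LinearIndependent (Fqsub p e K) g)
    (T : Finset (Fin N)) (hT : T.card = N - s)
    (a₁ a₂ : Fin M' → K)
    (w₁ w₂ : Fin N → K) (hw₁ : rankFq p e K w₁ ≤ t') (hw₂ : rankFq p e K w₂ ≤ t')
    (heq : ∀ i ∈ T,
        (∑ j, a₁ j * g i ^ (p ^ e) ^ (j : ℕ)) + w₁ i =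
        (∑ j, a₂ j * g i ^ (p ^ e) ^ (j : ℕ)) + w₂ i) :
    a₁ = a₂ := by
  rw [← Nat.card_eq_fintype_card] at hcard
  have hq : 1 < p ^ e :=
    lt_of_pow_lt_pow_left₀ m (Nat.zero_le _) (by rw [one_pow, ← hcard]; exact Finite.one_lt_card)
  set V := Submodule.span (Fqsub p e K) (Set.range fun i : T ↦ g i)
  set W :=
    Submodule.span (Fqsub p e K) (Set.range w₁) ⊔ Submodule.span (Fqsub p e K) (Set.range w₂)
  have hV : finrank (Fqsub p e K) V = N - s := by
    rw [← hT, ← Fintype.card_coe]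
    exact finrank_span_eq_card (hg.comp _ Subtype.val_injective)
  have hW : finrank (Fqsub p e K) W ≤ 2 * t' :=
    (Submodule.finrank_add_le_finrank_add_finrank _ _).trans (by unfold rankFq at hw₁ hw₂; omega)
  have hVW : V.map (linearizedMap p e (a₁ - a₂)) ≤ W := by
    rw [Submodule.map_span_le]
    rintro _ ⟨i, rfl⟩
    have hi : linearizedMap p e (a₁ - a₂) (g i) = w₂ i - w₁ i := by
      simp only [linearizedMap_apply, Pi.sub_apply, sub_mul, Finset.sum_sub_distrib]
      linear_combination heq i i.2
    rw [hi]
    exact sub_mem (Submodule.mem_sup_right (Submodule.subset_span ⟨i, rfl⟩))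
      (Submodule.mem_sup_left (Submodule.subset_span ⟨i, rfl⟩))
  have hker := Submodule.finrank_le_finrank_inf_ker_add_finrank hVW
  exact sub_eq_zero.1 (eq_zero_of_le_finrank_of_le_ker_linearizedMap hq
    (Fqsub.le_natCard p e hcard hq) (inf_le_right (a := V)) (by omega))

/-- Decoding content of Theorem 3. Let `2t' + s ≤ N - M'`, let
`g_1, …, g_N ∈ K` (`m ≥ N`) be linearly independent over `F_q`, and let
`T ⊆ {1, …, N}` with `|T| = N - s`. If two linearized polynomials of `q`-degree at most
`M' - 1`, corrupted by errors of rank at most `t'`, agree on all coordinates in `T`,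
then their coefficient vectors coincide. -/
theorem construction_II_decoding
    (p e m : ℕ) [Fact p.Prime] (hq : 1 ≤ e)
    (K : Type*) [Field K] [Fintype K] [CharP K p]
    (hcard : Fintype.card K = (p ^ e) ^ m)
    (N M' t' s : ℕ) (hts : 2 * t' + s + M' ≤ N) (hNm : N ≤ m)
    (g : Fin N → K) (hg : LinearIndependent (Fqsub p e K) g)
    (T : Finset (Fin N)) (hT : T.card = N - s)
    (a₁ a₂ : Fin M' → K)
    (w₁ w₂ : Fin N → K) (hw₁ : rankFq p e K w₁ ≤ t') (hw₂ : rankFq p e K w₂ ≤ t')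
    (heq : ∀ i ∈ T,
        (∑ j, a₁ j * g i ^ (p ^ e) ^ (j : ℕ)) + w₁ i =
        (∑ j, a₂ j * g i ^ (p ^ e) ^ (j : ℕ)) + w₂ i) :
    a₁ = a₂ :=
  construction_II_decoding_general p e m K hcard N M' t' s hts g hg T hT a₁ a₂ w₁ w₂ hw₁ hw₂ heq
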